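/- Subject Reduction for multiset policies: if N is a coherent system, ⊢N:ok (with multiset well-formedness), and N → N', then N' is coherent and ⊢N':ok. -/
import Mathlib


universe u

/-! ## Basic framework: trust levels, agents, membranes, systems -/

/-- Trust levels: `loc` (unknown), `lgood`, `lbad`. -/
inductive TrustLev : Type where
  | loc : TrustLev
  | lgood : TrustLev
  | lbad : TrustLev
deriving DecidableEq

/-- The subtyping order `<:` on trust levels: it is reflexive and satisfies
`loc <: lgood` and `loc <: lbad`. -/
def TrustLev.sub (t1 t2 : TrustLev) : Prop := t1 = t2 ∨ t1 = TrustLev.loc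

/-- Agents, parametric on the type `Act` of basic actions, the type `Loc` of
localities, and the type `Pol` of policies (digests carried by `go`). -/
inductive Agent (Act Loc : Type) (Pol : Type u) where
  | nil : Agent Act Loc Pol
  | act : Act → Agent Act Loc Pol → Agent Act Loc Pol
  | go : Loc → Pol → Agent Act Loc Pol → Agent Act Loc Pol
  | par : Agent Act Loc Pol → Agent Act Loc Pol → Agent Act Loc Pol
  | repl : Agent Act Loc Pol → Agent Act Loc Pol

/-- A membrane: a trust function on localities together with a policy.
(The partial trust function is modelled as a total function, the level `loc`
standing for ``unknown''.) -/
structure Membrane (Loc : Type) (Pol : Type u) where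
  trust : Loc → TrustLev
  pol : Pol

/-- Systems: the empty system, a site `l[M]{P}`, or a parallel composition. -/
inductive System (Act Loc : Type) (Pol : Type u) where
  | empty : System Act Loc Pol
  | site : Loc → Membrane Loc Pol → Agent Act Loc Pol → System Act Loc Pol
  | par : System Act Loc Pol → System Act Loc Pol → System Act Loc Pol

variable {Act Loc : Type} {Pol : Type u}

/-- The list of sites (name and membrane) occurring in a system. -/
def System.sites : System Act Loc Pol → List (Loc × Membrane Loc Pol)
  | System.empty => []
  | System.site l M _ => [(l, M)]
  | System.par N1 N2 => N1.sites ++ N2.sites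

/-- A site named `l` with membrane `M` is trustworthy if `M_t(l) = lgood`. -/
def Trustworthy (l : Loc) (M : Membrane Loc Pol) : Prop :=
  M.trust l = TrustLev.lgood

/-- A system is coherent if `M^k_t(l) <: M^l_t(l)` for every trustworthy site `k`
and every site `l` of the system. -/
def Coherent (N : System Act Loc Pol) : Prop :=
  ∀ p ∈ N.sites, Trustworthy p.1 p.2 →
    ∀ q ∈ N.sites, TrustLev.sub (p.2.trust q.1) (q.2.trust q.1)

/-- `SiteIn l M P N` holds when the site `l[M]{P}` occurs in the system `N`. -/
inductive SiteIn (l : Loc) (M : Membrane Loc Pol) (P : Agent Act Loc Pol) :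
    System Act Loc Pol → Prop where
  | here : SiteIn l M P (System.site l M P)
  | left {N1 N2} : SiteIn l M P N1 → SiteIn l M P (System.par N1 N2)
  | right {N1 N2} : SiteIn l M P N2 → SiteIn l M P (System.par N1 N2)

/-- Structural equivalence on agents: `|` is commutative and associative with
unit `nil`, replication unfolds, and `≡` is a congruence for `|`. -/
inductive AgEq : Agent Act Loc Pol → Agent Act Loc Pol → Prop where
  | refl (P) : AgEq P P
  | symm {P Q} : AgEq P Q → AgEq Q P
  | trans {P Q R} : AgEq P Q → AgEq Q R → AgEq P R
  | parNil (P) : AgEq (Agent.par P Agent.nil) P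
  | parComm (P Q) : AgEq (Agent.par P Q) (Agent.par Q P)
  | parAssoc (P Q R) :
      AgEq (Agent.par (Agent.par P Q) R) (Agent.par P (Agent.par Q R))
  | replUnfold (P Q) :
      AgEq (Agent.par (Agent.repl P) Q) (Agent.par P (Agent.par (Agent.repl P) Q))
  | parCong {P P' Q Q'} : AgEq P P' → AgEq Q Q' → AgEq (Agent.par P Q) (Agent.par P' Q')

/-- Structural equivalence on systems. -/
inductive StrEq : System Act Loc Pol → System Act Loc Pol → Prop where
  | refl (N) : StrEq N N
  | symm {N1 N2} : StrEq N1 N2 → StrEq N2 N1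
  | trans {N1 N2 N3} : StrEq N1 N2 → StrEq N2 N3 → StrEq N1 N3
  | parEmpty (N) : StrEq (System.par N System.empty) N
  | parComm (N1 N2) : StrEq (System.par N1 N2) (System.par N2 N1)
  | parAssoc (N1 N2 N3) :
      StrEq (System.par (System.par N1 N2) N3) (System.par N1 (System.par N2 N3))
  | parCong {N1 N1' N2 N2'} :
      StrEq N1 N1' → StrEq N2 N2' → StrEq (System.par N1 N2) (System.par N1' N2')
  | site (l M) {P Q} : AgEq P Q → StrEq (System.site l M P) (System.site l M Q)

/-- The reduction relation over systems, parametric on the `enforces`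
relation `enf` between policies and on the typechecking relation `typ`
between agents and policies.  In rule `mig`, if the target site `l` trusts
the source site `k` then the digest `T` is checked against `l`'s policy,
otherwise the full code `P` is typechecked. -/
inductive Red (enf : Pol → Pol → Prop) (typ : Agent Act Loc Pol → Pol → Prop) :
    System Act Loc Pol → System Act Loc Pol → Prop where
  | act (l M a P Q) :
      Red enf typ (System.site l M (Agent.par (Agent.act a P) Q))
        (System.site l M (Agent.par P Q))
  | par {N1 N1'} (N2) :
      Red enf typ N1 N1' → Red enf typ (System.par N1 N2) (System.par N1' N2)
  | struct {N N1 N1' N'} :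
      StrEq N N1 → Red enf typ N1 N1' → StrEq N1' N' → Red enf typ N N'
  | mig (k Mk l Ml T P Q R) :
      (if Ml.trust k = TrustLev.lgood then enf T Ml.pol else typ P Ml.pol) →
      Red enf typ
        (System.par (System.site k Mk (Agent.par (Agent.go l T P) Q))
          (System.site l Ml R))
        (System.par (System.site k Mk Q) (System.site l Ml (Agent.par P R)))

/-- The labelled transition system over agents, with labels in `Act ⊕ Loc`. -/
inductive Step : Agent Act Loc Pol → (Act ⊕ Loc) → Agent Act Loc Pol → Prop where
  | act (a P) : Step (Agent.act a P) (Sum.inl a) P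
  | mig (l T P) : Step (Agent.go l T P) (Sum.inr l) Agent.nil
  | repl {P α P'} :
      Step (Agent.par P (Agent.repl P)) α P' → Step (Agent.repl P) α P'
  | parL {P1 α P1'} (P2) :
      Step P1 α P1' → Step (Agent.par P1 P2) α (Agent.par P1' P2)
  | parR {P1 α P1'} (P2) :
      Step P1 α P1' → Step (Agent.par P2 P1) α (Agent.par P2 P1')

/-- `Trace P σ P'` means `P →σ P'`: the composite of the single steps of `σ`. -/
inductive Trace : Agent Act Loc Pol → List (Act ⊕ Loc) → Agent Act Loc Pol → Prop where
  | nil (P) : Trace P [] P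
  | cons {P α P' σ P''} : Step P α P' → Trace P' σ P'' → Trace P (α :: σ) P''

/-- The thread components of an agent: every agent is `P1 | ... | Pn`
with each `Pi` a thread (not itself a parallel composition). -/
def Agent.comps : Agent Act Loc Pol → List (Agent Act Loc Pol)
  | Agent.par P Q => P.comps ++ Q.comps
  | P => [P]

/-- A thread is an agent which is not a parallel composition. -/
def Agent.IsThread : Agent Act Loc Pol → Prop
  | Agent.par _ _ => False
  | _ => True

/-! ## Multiset policies -/

/-- A multiset policy: a multiset over `Act ⊕ Loc` with multiplicities in
`ℕ ∪ {ω}` (i.e. `ℕ∞`) and finite support.  Multiset sum is `+` (with `ω = ⊤`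
absorbing) and multiset inclusion is the pointwise order `≤`. -/
abbrev MPolicy (Act Loc : Type) : Type := (Act ⊕ Loc) →₀ ℕ∞

/-- `T^ω`: the multiset assigning `ω` to every element of the support of `T`. -/
noncomputable def omegafy (T : MPolicy Act Loc) : MPolicy Act Loc :=
  Finsupp.mapRange (fun n => if n = 0 then 0 else (⊤ : ℕ∞)) (by simp) T

/-- Typechecking of agents against multiset policies, `⊢ P : T`. -/
inductive MTypes : Agent Act Loc (MPolicy Act Loc) → MPolicy Act Loc → Prop where
  | nil (T) : MTypes Agent.nil T
  | act {a P T} :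
      MTypes P T → MTypes (Agent.act a P) (T + Finsupp.single (Sum.inl a) 1)
  | go {l T' P T} :
      MTypes P T' → MTypes (Agent.go l T' P) (T + Finsupp.single (Sum.inr l) 1)
  | par {P Q T1 T2} :
      MTypes P T1 → MTypes Q T2 → MTypes (Agent.par P Q) (T1 + T2)
  | repl {P T T'} : MTypes P T → omegafy T ≤ T' → MTypes (Agent.repl P) T'

/-- `Sset σ`: the multiset of labels occurring in the trace `σ`. -/
noncomputable def Sset (σ : List (Act ⊕ Loc)) : MPolicy Act Loc :=
  (σ.map fun α => Finsupp.single α (1 : ℕ∞)).sum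

/-- Well-formedness of systems for multiset (entry) policies: at a trustworthy
site every thread component of the resident code typechecks against the
membrane's policy. -/
inductive OkM : System Act Loc (MPolicy Act Loc) → Prop where
  | empty : OkM System.empty
  | par {N1 N2} : OkM N1 → OkM N2 → OkM (System.par N1 N2)
  | siteU {l M P} : ¬ Trustworthy l M → OkM (System.site l M P)
  | siteG {l M P} :
      Trustworthy l M → (∀ Pi ∈ Agent.comps P, MTypes Pi M.pol) →
      OkM (System.site l M P)


section SRaux

variable {Act Loc : Type}

/-- `T ≤ omegafy T`. -/
theorem le_omegafy (T : MPolicy Act Loc) : T ≤ omegafy T := by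
  rw [Finsupp.le_def]
  intro x
  simp only [omegafy, Finsupp.mapRange_apply]
  by_cases h : T x = 0 <;> simp [h]

/-- Weakening for multiset typing. -/
theorem mtypes_mono {P : Agent Act Loc (MPolicy Act Loc)} {T T' : MPolicy Act Loc}
    (h : MTypes P T) (hle : T ≤ T') : MTypes P T' := by
  obtain ⟨S, rfl⟩ := exists_add_of_le hle
  clear hle
  induction h generalizing S with
  | nil => exact MTypes.nil _
  | @act a P T hP ih =>
      have := MTypes.act (a := a) (ih S)
      rwa [add_right_comm] at this
  | @go l T' P T hP ih =>
      have := MTypes.go (T := T + S) (l := l) hP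
      rwa [add_right_comm] at this
  | par h1 h2 ih1 ih2 =>
      have := MTypes.par (ih1 S) h2
      rwa [add_assoc, add_comm S _, ← add_assoc] at this
  | repl h1 h2 _ => exact MTypes.repl h1 (le_trans h2 le_self_add)


/-- Every thread component typechecks against the same policy. -/
theorem mtypes_comps {P : Agent Act Loc (MPolicy Act Loc)} {T : MPolicy Act Loc}
    (h : MTypes P T) : ∀ Pi ∈ Agent.comps P, MTypes Pi T := by
  induction h with
  | nil =>
      intro Pi hPi
      simp only [Agent.comps, List.mem_singleton] at hPi
      subst hPi; exact MTypes.nil _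
  | @act a P T hP ih =>
      intro Pi hPi
      simp only [Agent.comps, List.mem_singleton] at hPi
      subst hPi; exact MTypes.act hP
  | @go l T' P T hP ih =>
      intro Pi hPi
      simp only [Agent.comps, List.mem_singleton] at hPi
      subst hPi; exact MTypes.go hP
  | @par P Q T1 T2 h1 h2 ih1 ih2 =>
      intro Pi hPi
      simp only [Agent.comps, List.mem_append] at hPi
      rcases hPi with hPi | hPi
      · exact mtypes_mono (ih1 Pi hPi) le_self_add
      · exact mtypes_mono (ih2 Pi hPi) le_add_self
  | @repl P T T' h1 h2 ih =>
      intro Pi hPi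
      simp only [Agent.comps, List.mem_singleton] at hPi
      subst hPi; exact MTypes.repl h1 h2

/-- Inversion for replication: the body typechecks against the same policy. -/
theorem mtypes_repl_inv {P : Agent Act Loc (MPolicy Act Loc)} {T : MPolicy Act Loc}
    (h : MTypes (Agent.repl P) T) : MTypes P T := by
  cases h with
  | repl h1 h2 => exact mtypes_mono h1 (le_trans (le_omegafy _) h2)

/-- Inversion for action prefixes. -/
theorem mtypes_act_inv {a : Act} {P : Agent Act Loc (MPolicy Act Loc)}
    {T : MPolicy Act Loc} (h : MTypes (Agent.act a P) T) : MTypes P T := by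
  cases h with | act hP => exact mtypes_mono hP le_self_add

/-- Inversion for migration prefixes. -/
theorem mtypes_go_inv {l : Loc} {T' : MPolicy Act Loc}
    {P : Agent Act Loc (MPolicy Act Loc)} {T : MPolicy Act Loc}
    (h : MTypes (Agent.go l T' P) T) : MTypes P T' := by
  cases h with | go hP => exact hP

/-- Structural equivalence of agents preserves the property that all thread
components typecheck. -/
theorem ageq_comps {P Q : Agent Act Loc (MPolicy Act Loc)} (h : AgEq P Q)
    (T : MPolicy Act Loc) :
    (∀ Pi ∈ Agent.comps P, MTypes Pi T) ↔ (∀ Qi ∈ Agent.comps Q, MTypes Qi T) := by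
  induction h with
  | refl => exact Iff.rfl
  | symm _ ih => exact ih.symm
  | trans _ _ ih1 ih2 => exact ih1.trans ih2
  | parNil P =>
      simp only [Agent.comps, List.mem_append, List.mem_singleton]
      constructor
      · intro h Pi hPi; exact h Pi (Or.inl hPi)
      · intro h Pi hPi
        rcases hPi with hPi | rfl
        · exact h Pi hPi
        · exact MTypes.nil _
  | parComm P Q =>
      simp only [Agent.comps, List.mem_append]
      constructor <;> (intro h Pi hPi; exact h Pi hPi.symm)
  | parAssoc P Q R =>
      simp only [Agent.comps, List.mem_append]
      constructor <;> (intro h Pi hPi; exact h Pi (by tauto))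
  | replUnfold P Q =>
      simp only [Agent.comps, List.mem_append, List.mem_singleton]
      constructor
      · intro h Pi hPi
        rcases hPi with hPi | (rfl | hPi)
        · exact mtypes_comps (mtypes_repl_inv (h _ (Or.inl rfl))) Pi hPi
        · exact h _ (Or.inl rfl)
        · exact h Pi (Or.inr hPi)
      · intro h Pi hPi
        rcases hPi with rfl | hPi
        · exact h _ (Or.inr (Or.inl rfl))
        · exact h Pi (Or.inr (Or.inr hPi))
  | @parCong P P' Q Q' _ _ ih1 ih2 =>
      simp only [Agent.comps, List.mem_append]
      constructor
      · intro h Pi hPi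
        rcases hPi with hPi | hPi
        · exact (ih1.mp fun x hx => h x (Or.inl hx)) Pi hPi
        · exact (ih2.mp fun x hx => h x (Or.inr hx)) Pi hPi
      · intro h Pi hPi
        rcases hPi with hPi | hPi
        · exact (ih1.mpr fun x hx => h x (Or.inl hx)) Pi hPi
        · exact (ih2.mpr fun x hx => h x (Or.inr hx)) Pi hPi

/-- Structurally equivalent systems have the same sites (as sets). -/
theorem streq_sites {N N' : System Act Loc (MPolicy Act Loc)} (h : StrEq N N') :
    ∀ p, p ∈ N.sites ↔ p ∈ N'.sites := by
  induction h with
  | refl N => intro p; exact Iff.rfl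
  | symm _ ih => intro p; exact (ih p).symm
  | trans _ _ ih1 ih2 => intro p; exact (ih1 p).trans (ih2 p)
  | parEmpty N => intro p; simp [System.sites]
  | parComm N1 N2 => intro p; simp [System.sites]; tauto
  | parAssoc N1 N2 N3 => intro p; simp [System.sites]; try tauto
  | parCong _ _ ih1 ih2 => intro p; simp [System.sites, ih1 p, ih2 p]
  | site l M _ => intro p; simp [System.sites]

/-- If two systems have the same sites then coherence transfers. -/
theorem coherent_of_sites {N N' : System Act Loc (MPolicy Act Loc)}
    (h : ∀ p, p ∈ N.sites ↔ p ∈ N'.sites) (hc : Coherent N) : Coherent N' := by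
  intro p hp ht q hq
  exact hc p ((h p).mpr hp) ht q ((h q).mpr hq)

/-- Structural equivalence preserves well-formedness. -/
theorem streq_ok {N N' : System Act Loc (MPolicy Act Loc)} (h : StrEq N N') :
    OkM N ↔ OkM N' := by
  induction h with
  | refl N => exact Iff.rfl
  | symm _ ih => exact ih.symm
  | trans _ _ ih1 ih2 => exact ih1.trans ih2
  | parEmpty N =>
      constructor
      · intro h; cases h with | par h1 h2 => exact h1
      · intro h; exact OkM.par h OkM.empty
  | parComm N1 N2 =>
      constructor <;> (intro h; cases h with | par h1 h2 => exact OkM.par h2 h1)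
  | parAssoc N1 N2 N3 =>
      constructor
      · intro h
        cases h with | par h12 h3 =>
        cases h12 with | par h1 h2 =>
        exact OkM.par h1 (OkM.par h2 h3)
      · intro h
        cases h with | par h1 h23 =>
        cases h23 with | par h2 h3 =>
        exact OkM.par (OkM.par h1 h2) h3
  | parCong _ _ ih1 ih2 =>
      constructor <;>
        (intro h; cases h with | par h1 h2 => ?_)
      · exact OkM.par (ih1.mp h1) (ih2.mp h2)
      · exact OkM.par (ih1.mpr h1) (ih2.mpr h2)
  | site l M hPQ =>
      constructor
      · intro h
        cases h with
        | siteU h1 => exact OkM.siteU h1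
        | siteG h1 h2 => exact OkM.siteG h1 ((ageq_comps hPQ _).mp h2)
      · intro h
        cases h with
        | siteU h1 => exact OkM.siteU h1
        | siteG h1 h2 => exact OkM.siteG h1 ((ageq_comps hPQ _).mpr h2)

/-- Reduction preserves the set of sites. -/
theorem red_sites {N N' : System Act Loc (MPolicy Act Loc)}
    (h : Red (fun T1 T2 : MPolicy Act Loc => T1 ≤ T2) MTypes N N') :
    ∀ p, p ∈ N.sites ↔ p ∈ N'.sites := by
  induction h with
  | act l M a P Q => intro p; exact Iff.rfl
  | par N2 _ ih => intro p; simp [System.sites, ih p]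
  | struct h1 _ h2 ih =>
      intro p; exact ((streq_sites h1 p).trans (ih p)).trans (streq_sites h2 p)
  | mig k Mk l Ml T P Q R _ => intro p; exact Iff.rfl

/-- Reduction preserves well-formedness of coherent systems. -/
theorem red_ok {N N' : System Act Loc (MPolicy Act Loc)}
    (h : Red (fun T1 T2 : MPolicy Act Loc => T1 ≤ T2) MTypes N N')
    (hcoh : Coherent N) (hok : OkM N) : OkM N' := by
  induction h with
  | act l M a P Q =>
      cases hok with
      | siteU h1 => exact OkM.siteU h1
      | siteG h1 h2 =>
        refine OkM.siteG h1 ?_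
        intro Pi hPi
        simp only [Agent.comps, List.mem_append, List.mem_singleton] at hPi ⊢
        rcases hPi with hPi | hPi
        · have hact : MTypes (Agent.act a P) M.pol := by
            apply h2
            simp [Agent.comps]
          exact mtypes_comps (mtypes_act_inv hact) Pi hPi
        · exact h2 Pi (by simp [Agent.comps, hPi])
  | par N2 _ ih =>
      cases hok with
      | par h1 h2 =>
        refine OkM.par (ih ?_ h1) h2
        intro p hp ht q hq
        exact hcoh p (by simp [System.sites, hp]) ht q (by simp [System.sites, hq])
  | struct h1 hred h2 ih =>
      have hc1 : Coherent _ := coherent_of_sites (streq_sites h1) hcoh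
      exact (streq_ok h2).mp (ih hc1 ((streq_ok h1).mp hok))
  | mig k Mk l Ml T P Q R hcond =>
      cases hok with
      | par hk hl =>
      refine OkM.par ?_ ?_
      · cases hk with
        | siteU h1 => exact OkM.siteU h1
        | siteG h1 h2 =>
          refine OkM.siteG h1 ?_
          intro Pi hPi
          exact h2 Pi (by simp [Agent.comps] at hPi ⊢; tauto)
      · cases hl with
        | siteU h1 => exact OkM.siteU h1
        | siteG h1 h2 =>
          refine OkM.siteG h1 ?_
          have hPtype : MTypes P Ml.pol := by
            by_cases hg : Ml.trust k = TrustLev.lgood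
            · rw [if_pos hg] at hcond
              -- l is trustworthy and trusts k, so by coherence k is trustworthy
              have hsub := hcoh (l, Ml) (by simp [System.sites]) h1 (k, Mk)
                (by simp [System.sites])
              have hkt : Trustworthy k Mk := by
                rcases hsub with hsub | hsub
                · rw [Trustworthy, ← hsub]; exact hg
                · rw [hg] at hsub; exact absurd hsub (by simp)
              cases hk with
              | siteU h3 => exact absurd hkt h3
              | siteG h3 h4 =>
                have hgo : MTypes (Agent.go l T P) Mk.pol := by
                  apply h4
                  simp [Agent.comps]
                exact mtypes_mono (mtypes_go_inv hgo) hcond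
            · rw [if_neg hg] at hcond
              exact hcond
          intro Pi hPi
          simp only [Agent.comps, List.mem_append] at hPi
          rcases hPi with hPi | hPi
          · exact mtypes_comps hPtype Pi hPi
          · exact h2 Pi hPi

end SRaux

/-- **Subject Reduction for multiset policies**: if `N` is a coherent system,
`⊢ N : ok` (with multiset well-formedness), and `N → N'`, then `N'` is
coherent and `⊢ N' : ok`. -/
theorem subject_reduction_multiset
    {N N' : System Act Loc (MPolicy Act Loc)}
    (hcoh : Coherent N) (hok : OkM N)
    (hred : Red (fun T1 T2 : MPolicy Act Loc => T1 ≤ T2) MTypes N N') :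
    Coherent N' ∧ OkM N' := by
  exact ⟨coherent_of_sites (red_sites hred) hcoh, red_ok hred hcoh hok⟩
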